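/- Let S₁ and S₂ be quasi-pseudo-regular subspaces of a Kreĭn space with S₁ ⊥ S₂ (in the indefinite inner product). Then S₁ + S₂ is quasi-pseudo-regular; moreover writing Sᵢ = Rᵢ ⊕ Nᵢ with Rᵢ regular and Nᵢ neutral, one has S₁+S₂ = (R₁+R₂) ⊕ (N₁+N₂) where R₁+R₂ is regular, N₁+N₂ is neutral, and (R₁+R₂) ∩ (N₁+N₂) = {0}. -/

import Mathlib

/-!
Since `R₂ ⊆ R₁^⊥`, the sum `R₁ + R₂` is the preimage of the closed subspace `R₂` under the
continuous projection onto `R₁^⊥` along `R₁`, hence closed, and the decompositions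
`H = Rᵢ ⊕ Rᵢ^⊥` combine into `H = (R₁ + R₂) ⊕ (R₁ + R₂)^⊥`. Neutrality of `N₁ + N₂` and its
orthogonality to `R₁ + R₂` follow by expanding the Hermitian form `[x, y]`.

`S₁ + S₂` is an operator range: splitting a Hilbert basis along `w ≃ w ⊕ w` gives two isometries
of an infinite-dimensional `H` with orthogonal ranges, their adjoints a bounded surjection
`H → H × H`, and composing it with `(x, y) ↦ T₁ x + T₂ y` gives the operator. In finite
dimension every subspace is closed, hence the range of its orthogonal projection.
-/

open ContinuousLinearMap

noncomputable section

namespace KreinPaper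

variable {H : Type*} [NormedAddCommGroup H] [InnerProductSpace ℂ H] [CompleteSpace H]

/-- The indefinite orthogonal companion of a subspace, with respect to the
indefinite inner product `[x, y] = ⟪J x, y⟫`. -/
def kOrth (J : H →L[ℂ] H) (S : Submodule ℂ H) : Submodule ℂ H where
  carrier := {y | ∀ x ∈ S, (inner ℂ (J x) y : ℂ) = 0}
  add_mem' := by
    intro a b ha hb x hx
    simp only [Set.mem_setOf_eq] at ha hb ⊢
    rw [inner_add_right, ha x hx, hb x hx, add_zero]
  zero_mem' := by
    intro x _
    exact inner_zero_right _
  smul_mem' := by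
    intro c a ha x hx
    simp only [Set.mem_setOf_eq] at ha ⊢
    rw [inner_smul_right, ha x hx, mul_zero]

/-- A regular subspace: closed, with `R ∩ R^⊥ = 0` and `R + R^⊥ = H`. -/
def IsRegular (J : H →L[ℂ] H) (R : Submodule ℂ H) : Prop :=
  IsClosed (R : Set H) ∧ R ⊓ kOrth J R = ⊥ ∧ R ⊔ kOrth J R = ⊤

/-- A neutral subspace: the indefinite inner product vanishes on it. -/
def IsNeutral (J : H →L[ℂ] H) (N : Submodule ℂ H) : Prop :=
  ∀ n ∈ N, (inner ℂ (J n) n : ℂ) = 0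

/-- Two subspaces are orthogonal in the indefinite inner product. -/
def AreKOrth (J : H →L[ℂ] H) (A B : Submodule ℂ H) : Prop :=
  ∀ a ∈ A, ∀ b ∈ B, (inner ℂ (J a) b : ℂ) = 0

/-- An operator range: the range of a bounded operator (equivalently, of a
bounded operator on `H` itself). -/
def IsOpRange (S : Submodule ℂ H) : Prop :=
  ∃ T : H →L[ℂ] H, LinearMap.range (T : H →ₗ[ℂ] H) = S

/-- Quasi-pseudo-regular subspace: an operator range which is the orthogonal
sum of a regular subspace and a neutral subspace. -/
def IsQpr (J : H →L[ℂ] H) (S : Submodule ℂ H) : Prop :=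
  IsOpRange S ∧ ∃ R N : Submodule ℂ H,
    IsRegular J R ∧ IsNeutral J N ∧ AreKOrth J R N ∧ S = R ⊔ N

/-- Pseudo-regular subspace: a closed subspace which is the orthogonal
sum of a regular subspace and a neutral subspace. -/
def IsPseudoRegular (J : H →L[ℂ] H) (S : Submodule ℂ H) : Prop :=
  IsClosed (S : Set H) ∧ ∃ R N : Submodule ℂ H,
    IsRegular J R ∧ IsNeutral J N ∧ AreKOrth J R N ∧ S = R ⊔ N

/-- A fundamental symmetry: a selfadjoint involution. -/
def IsFundSym (J : H →L[ℂ] H) : Prop :=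
  IsSelfAdjoint J ∧ J ∘L J = ContinuousLinearMap.id ℂ H

/-- The indefinite (Kreĭn space) adjoint `A* = J A† J`. -/
def kAdj (J : H →L[ℂ] H) (A : H →L[ℂ] H) : H →L[ℂ] H :=
  J ∘L (ContinuousLinearMap.adjoint A) ∘L J

section TopologicalComplement

variable {R M : Type*} [Ring R] [AddCommGroup M] [Module R M] [TopologicalSpace M]
  [IsTopologicalAddGroup M]

theorem _root_.Submodule.IsTopCompl.isClosed_sup_of_le {p q m : Submodule R M}
    (h : p.IsTopCompl q) (hm : IsClosed (m : Set M)) (hmq : m ≤ q) :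
    IsClosed ((p ⊔ m : Submodule R M) : Set M) := by
  suffices ((p ⊔ m : Submodule R M) : Set M) = q.projectionL p h.symm ⁻¹' m from
    this ▸ hm.preimage (q.projectionL p h.symm).continuous
  ext x
  constructor
  · intro hx
    obtain ⟨a, ha, c, hc, rfl⟩ := Submodule.mem_sup.1 hx
    have hpa : q.projectionL p h.symm a = 0 :=
      (Submodule.projectionL_apply_eq_zero_iff h.symm).2 ha
    have hpc : q.projectionL p h.symm c = c :=
      (Submodule.projectionL_eq_self_iff h.symm c).2 (hmq hc)
    show q.projectionL p h.symm (a + c) ∈ m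
    rwa [map_add, hpa, hpc, zero_add]
  · intro hx
    exact Submodule.mem_sup.2 ⟨p.projectionL q h x, Submodule.projectionL_apply_mem h x, _, hx,
      Submodule.projectionL_add_projectionL_eq_self h x⟩

end TopologicalComplement

section InfiniteDimensional

variable {𝕜 E : Type*} [RCLike 𝕜] [NormedAddCommGroup E] [InnerProductSpace 𝕜 E]

theorem inner_eq_zero_of_hasSum {ι : Type*} {c : ι → 𝕜} {u : ι → E} {s z : E}
    (hs : HasSum (fun i => c i • u i) s) (hz : ∀ i, inner 𝕜 z (u i) = 0) :
    inner 𝕜 z s = 0 :=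
  ((innerSL 𝕜 z).hasSum hs).unique (by simp [hz])

theorem exists_linearIsometry_pair_inner_eq_zero [CompleteSpace E]
    (hE : ¬ FiniteDimensional 𝕜 E) : ∃ V₁ V₂ : E →ₗᵢ[𝕜] E, ∀ x y, inner 𝕜 (V₁ x) (V₂ y) = 0 := by
  obtain ⟨w, b, -⟩ := exists_hilbertBasis 𝕜 E
  have : Infinite w := by
    refine not_finite_iff_infinite.1 fun hw => hE ?_
    have := Fintype.ofFinite w
    exact b.toOrthonormalBasis.toBasis.finiteDimensional_of_finite
  obtain ⟨e⟩ : Nonempty (w ⊕ w ≃ w) :=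
    Cardinal.eq.1 (by simp [Cardinal.add_eq_self (Cardinal.aleph0_le_mk w)])
  have hv : Orthonormal 𝕜 (b ∘ e) := b.orthonormal.comp e e.injective
  let V (k : w → w ⊕ w) (hk : Function.Injective k) : E →ₗᵢ[𝕜] E :=
    (hv.comp k hk).orthogonalFamily.linearIsometry.comp b.repr.toLinearIsometry
  have hV (k : w → w ⊕ w) (hk : Function.Injective k) (x : E) :
      HasSum (fun i => b.repr x i • b (e (k i))) (V k hk x) :=
    (hv.comp k hk).orthogonalFamily.hasSum_linearIsometry (b.repr x)
  refine ⟨V Sum.inl Sum.inl_injective, V Sum.inr Sum.inr_injective, fun x y => ?_⟩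
  refine inner_eq_zero_symm.1 <| inner_eq_zero_of_hasSum (hV _ Sum.inl_injective x) fun i => ?_
  refine inner_eq_zero_symm.1 <| inner_eq_zero_of_hasSum (hV _ Sum.inr_injective y) fun j => ?_
  exact hv.2 Sum.inl_ne_inr

theorem adjoint_apply_add_of_inner_eq_zero [CompleteSpace E] {U W : E →ₗᵢ[𝕜] E}
    (hUW : ∀ x y, inner 𝕜 (U x) (W y) = 0) (y z : E) :
    adjoint U.toContinuousLinearMap (U y + W z) = y := by
  have hW : adjoint U.toContinuousLinearMap (W z) = 0 :=
    ext_inner_left 𝕜 fun v => by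
      rw [adjoint_inner_right, inner_zero_right]
      exact hUW v z
  rw [map_add, hW, add_zero]
  exact DFunLike.congr_fun U.adjoint_comp_self y

theorem exists_surjective_continuousLinearMap_prod [CompleteSpace E]
    (hE : ¬ FiniteDimensional 𝕜 E) : ∃ P : E →L[𝕜] E × E, Function.Surjective P := by
  obtain ⟨V₁, V₂, hV⟩ := exists_linearIsometry_pair_inner_eq_zero hE
  refine ⟨(adjoint V₁.toContinuousLinearMap).prod (adjoint V₂.toContinuousLinearMap),
    fun ⟨y₁, y₂⟩ => ⟨V₁ y₁ + V₂ y₂, ?_⟩⟩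
  have hV' : ∀ x y, inner 𝕜 (V₂ x) (V₁ y) = 0 := fun x y => inner_eq_zero_symm.1 (hV y x)
  rw [ContinuousLinearMap.prod_apply, adjoint_apply_add_of_inner_eq_zero hV, add_comm,
    adjoint_apply_add_of_inner_eq_zero hV']

end InfiniteDimensional

section KreinSpace

variable {E : Type*} [NormedAddCommGroup E] [InnerProductSpace ℂ E] {J : E →L[ℂ] E}

theorem kOrth_eq_orthogonal_map (J : E →L[ℂ] E) (S : Submodule ℂ E) :
    kOrth J S = (S.map (J : E →ₗ[ℂ] E))ᗮ := by
  ext y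
  simp [kOrth, Submodule.mem_orthogonal]

theorem isClosed_kOrth (J : E →L[ℂ] E) (S : Submodule ℂ E) : IsClosed (kOrth J S : Set E) :=
  kOrth_eq_orthogonal_map J S ▸ Submodule.isClosed_orthogonal _

theorem kOrth_sup (J : E →L[ℂ] E) (A B : Submodule ℂ E) :
    kOrth J (A ⊔ B) = kOrth J A ⊓ kOrth J B := by
  simp only [kOrth_eq_orthogonal_map, Submodule.map_sup, Submodule.inf_orthogonal]

theorem areKOrth_iff_le_kOrth {A B : Submodule ℂ E} : AreKOrth J A B ↔ B ≤ kOrth J A :=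
  ⟨fun h _ hb a ha => h a ha _ hb, fun h a ha _ hb => h hb a ha⟩

theorem AreKOrth.mono {A A' B B' : Submodule ℂ E} (h : AreKOrth J A B) (hA : A' ≤ A)
    (hB : B' ≤ B) : AreKOrth J A' B' :=
  fun a ha b hb => h a (hA ha) b (hB hb)

theorem AreKOrth.symm (hJ : (J : E →ₗ[ℂ] E).IsSymmetric) {A B : Submodule ℂ E}
    (h : AreKOrth J A B) : AreKOrth J B A :=
  fun b hb a ha => (hJ b a).trans (inner_eq_zero_symm.1 (h a ha b hb))

theorem areKOrth_sup_left {A₁ A₂ B : Submodule ℂ E} :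
    AreKOrth J (A₁ ⊔ A₂) B ↔ AreKOrth J A₁ B ∧ AreKOrth J A₂ B := by
  simp only [areKOrth_iff_le_kOrth, kOrth_sup, le_inf_iff]

theorem areKOrth_sup_right {A B₁ B₂ : Submodule ℂ E} :
    AreKOrth J A (B₁ ⊔ B₂) ↔ AreKOrth J A B₁ ∧ AreKOrth J A B₂ := by
  simp only [areKOrth_iff_le_kOrth, sup_le_iff]

theorem IsNeutral.sup (hJ : (J : E →ₗ[ℂ] E).IsSymmetric) {N₁ N₂ : Submodule ℂ E}
    (h₁ : IsNeutral J N₁) (h₂ : IsNeutral J N₂) (h : AreKOrth J N₁ N₂) :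
    IsNeutral J (N₁ ⊔ N₂) := by
  intro n hn
  obtain ⟨a, ha, c, hc, rfl⟩ := Submodule.mem_sup.1 hn
  simp only [map_add, inner_add_left, inner_add_right, h₁ a ha, h₂ c hc, h a ha c hc,
    h.symm hJ c hc a ha, add_zero]

namespace IsRegular

variable {R R₁ R₂ : Submodule ℂ E}

theorem isTopCompl [CompleteSpace E] (hR : IsRegular J R) : R.IsTopCompl (kOrth J R) :=
  Submodule.IsCompl.isTopCompl_of_isClosed ⟨disjoint_iff.2 hR.2.1, codisjoint_iff.2 hR.2.2⟩
    hR.1 (isClosed_kOrth J R)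

theorem eq_zero_of_mem_kOrth (hR : IsRegular J R) {x : E} (hx : x ∈ R) (hx' : x ∈ kOrth J R) :
    x = 0 := by
  simpa [hR.2.1] using Submodule.mem_inf.2 ⟨hx, hx'⟩

theorem mem_sup_kOrth (hR : IsRegular J R) (x : E) : x ∈ R ⊔ kOrth J R :=
  hR.2.2 ▸ Submodule.mem_top

theorem inf_eq_bot (hR : IsRegular J R) {N : Submodule ℂ E} (h : AreKOrth J R N) : R ⊓ N = ⊥ :=
  eq_bot_iff.2 (hR.2.1 ▸ inf_le_inf_left R (areKOrth_iff_le_kOrth.1 h))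

theorem sup [CompleteSpace E] (h₁ : IsRegular J R₁) (h₂ : IsRegular J R₂)
    (h : AreKOrth J R₁ R₂) : IsRegular J (R₁ ⊔ R₂) := by
  have h₂₁ : R₂ ≤ kOrth J R₁ := areKOrth_iff_le_kOrth.1 h
  refine ⟨h₁.isTopCompl.isClosed_sup_of_le h₂.1 h₂₁, ?_, ?_⟩
  · rw [kOrth_sup, eq_bot_iff]
    rintro x ⟨hx, hx₁, hx₂⟩
    obtain ⟨a, ha, c, hc, rfl⟩ := Submodule.mem_sup.1 hx
    obtain rfl : a = 0 :=
      h₁.eq_zero_of_mem_kOrth ha (by simpa using sub_mem hx₁ (h₂₁ hc))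
    rw [zero_add] at hx₂ ⊢
    exact h₂.eq_zero_of_mem_kOrth hc hx₂
  · rw [eq_top_iff]
    intro x _
    obtain ⟨a, ha, y, hy, rfl⟩ := Submodule.mem_sup.1 (h₁.mem_sup_kOrth x)
    obtain ⟨c, hc, z, hz, rfl⟩ := Submodule.mem_sup.1 (h₂.mem_sup_kOrth y)
    have hz₁ : z ∈ kOrth J R₁ := by simpa using sub_mem hy (h₂₁ hc)
    rw [kOrth_sup, ← add_assoc]
    exact Submodule.add_mem_sup (Submodule.add_mem_sup ha hc) ⟨hz₁, hz⟩

end IsRegular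

theorem isOpRange_of_isClosed [CompleteSpace E] {K : Submodule ℂ E} (hK : IsClosed (K : Set E)) :
    IsOpRange K :=
  have : CompleteSpace K := hK.completeSpace_coe
  ⟨K.starProjection, K.range_starProjection⟩

theorem IsOpRange.sup [CompleteSpace E] {S₁ S₂ : Submodule ℂ E} (h₁ : IsOpRange S₁)
    (h₂ : IsOpRange S₂) : IsOpRange (S₁ ⊔ S₂) := by
  by_cases hH : FiniteDimensional ℂ E
  · exact isOpRange_of_isClosed (Submodule.closed_of_finiteDimensional _)
  obtain ⟨T₁, rfl⟩ := h₁
  obtain ⟨T₂, rfl⟩ := h₂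
  obtain ⟨P, hP⟩ := exists_surjective_continuousLinearMap_prod hH
  refine ⟨(T₁.coprod T₂) ∘L P, ?_⟩
  rw [ContinuousLinearMap.toLinearMap_comp,
    LinearMap.range_comp_of_range_eq_top _ (LinearMap.range_eq_top.2 hP)]
  exact ContinuousLinearMap.range_coprod T₁ T₂

end KreinSpace

/-- the orthogonal sum of two orthogonal qpr subspaces is qpr,
with the indicated decomposition. -/
theorem sum_of_orth_qpr (J : H →L[ℂ] H) (hJ : IsFundSym J)
    (S1 S2 R1 R2 N1 N2 : Submodule ℂ H)
    (hS1 : IsOpRange S1) (hS2 : IsOpRange S2)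
    (hR1 : IsRegular J R1) (hR2 : IsRegular J R2)
    (hN1 : IsNeutral J N1) (hN2 : IsNeutral J N2)
    (hRN1 : AreKOrth J R1 N1) (hRN2 : AreKOrth J R2 N2)
    (hd1 : S1 = R1 ⊔ N1) (hd2 : S2 = R2 ⊔ N2)
    (horth : AreKOrth J S1 S2) :
    IsQpr J (S1 ⊔ S2) ∧
      S1 ⊔ S2 = (R1 ⊔ R2) ⊔ (N1 ⊔ N2) ∧
      IsRegular J (R1 ⊔ R2) ∧
      IsNeutral J (N1 ⊔ N2) ∧
      AreKOrth J (R1 ⊔ R2) (N1 ⊔ N2) ∧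
      (R1 ⊔ R2) ⊓ (N1 ⊔ N2) = ⊥ := by
  subst hd1 hd2
  have hReg : IsRegular J (R1 ⊔ R2) := hR1.sup hR2 (horth.mono le_sup_left le_sup_left)
  have hNeu : IsNeutral J (N1 ⊔ N2) :=
    hN1.sup hJ.1.isSymmetric hN2 (horth.mono le_sup_right le_sup_right)
  have hRN : AreKOrth J (R1 ⊔ R2) (N1 ⊔ N2) := by
    rw [areKOrth_sup_left, areKOrth_sup_right, areKOrth_sup_right]
    exact ⟨⟨hRN1, horth.mono le_sup_left le_sup_right⟩,
      (horth.mono le_sup_right le_sup_left).symm hJ.1.isSymmetric, hRN2⟩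
  have hsum : R1 ⊔ N1 ⊔ (R2 ⊔ N2) = R1 ⊔ R2 ⊔ (N1 ⊔ N2) := sup_sup_sup_comm _ _ _ _
  exact ⟨⟨hS1.sup hS2, _, _, hReg, hNeu, hRN, hsum⟩, hsum, hReg, hNeu, hRN, hReg.inf_eq_bot hRN⟩

end KreinPaper
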